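/- arXiv:1307.3747 — 4 statements merged into one kernel-verified Lean document; each statement's English description precedes it below -/
import Mathlib

section
/- Let Φ be a Drinfeld module of generic characteristic in normal form with good reduction at a finite place v of K (i.e., the coefficients of Φ_t are v-integral and Φ_t is monic). For any real number s with 0 < s < 1, there exist at most finitely many torsion points x of Φ with |x|_v < s. -/
/-!
Integrality of the coefficients and their support in `q`-power degrees give
`v (Φ_a x - a x) ≤ v x ^ q` on the closed unit disc, so there `Φ_a` is multiplication by `a`
up to order `q`. Hence a nonzero torsion point `x` of the disc killed by `a` has
`v a ≤ v x ^ (q - 1)`, and in the open disc only those `a` with `v a < 1` can kill anything.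
These `a` form an ideal `(P)` of `F_q[t]`. If `P = 0`, the only torsion point in the open disc
is `0`. Otherwise every torsion point there is `P`-power torsion, and `Φ_P` contracts the disc
`v x ≤ s` by the factor `κ = max (v P) (s ^ (q - 1)) < 1`, while nonzero `P`-torsion points have
`v z ≥ v P`. So `Φ_{P^N}` kills every torsion point with `v x < s` as soon as `κ ^ N < v P`,
and these points are among the finitely many roots of `Φ_{P^N}`.
-/

/-- A Drinfeld module of generic characteristic `Φ : F_q[t] → End(G_a)` over a field `K`,
recorded through the polynomials `Φ_a ∈ K[x]`: `Φ` is additive, turns multiplication into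
composition, each `Φ_a` has zero constant term, linear coefficient the image of `a` under
the structure map `alg : F_q[t] → K` (generic characteristic: `alg` injective), positive
degree for `a ≠ 0`, and coefficients supported at `q`-power degrees (F_q-linearity). -/
structure DrinfeldModuleData (Fq K : Type*) [Field Fq] [Fintype Fq] [Field K] where
  toFun : Polynomial Fq → Polynomial K
  alg : Polynomial Fq →+* K
  map_one' : toFun 1 = Polynomial.X
  map_add' : ∀ a b, toFun (a + b) = toFun a + toFun b
  map_mul' : ∀ a b, toFun (a * b) = (toFun a).comp (toFun b)
  coeff_zero' : ∀ a, (toFun a).coeff 0 = 0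
  coeff_one' : ∀ a, (toFun a).coeff 1 = alg a
  degree_pos' : ∀ a, a ≠ 0 → 0 < (toFun a).natDegree
  supp_q_pow' : ∀ a i, (toFun a).coeff i ≠ 0 → ∃ k : ℕ, i = Fintype.card Fq ^ k
  alg_injective' : Function.Injective alg

open Polynomial

lemma exists_dvd_iff_abv_lt_one {R S : Type*} [CommRing R] [IsPrincipalIdealRing R] [Semiring S]
    {v : AbsoluteValue S ℝ} (hna : IsNonarchimedean v) (f : R →+* S)
    (hf : ∀ a, v (f a) ≤ 1) :
    ∃ P : R, ∀ a, v (f a) < 1 ↔ P ∣ a := by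
  let I : Ideal R :=
    { carrier := {a | v (f a) < 1}
      add_mem' := fun {a b} ha hb => by
        simp only [Set.mem_ofPred_eq, map_add] at *
        exact (hna _ _).trans_lt (sup_lt_iff.2 ⟨ha, hb⟩)
      zero_mem' := by simp
      smul_mem' := fun c a ha => by
        simp only [Set.mem_ofPred_eq, smul_eq_mul, map_mul] at *
        exact (mul_le_of_le_one_left (v.nonneg _) (hf c)).trans_lt ha }
  obtain ⟨P, hP⟩ := (IsPrincipalIdealRing.principal I).principal
  refine ⟨P, fun a => ?_⟩
  rw [← Ideal.mem_span_singleton, ← Ideal.submodule_span_eq, ← hP]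
  rfl

namespace DrinfeldModuleData

variable {Fq K : Type*} [Field Fq] [Fintype Fq] [Field K] (Φ : DrinfeldModuleData Fq K)

lemma eval_mul (a b : Fq[X]) (x : K) :
    (Φ.toFun (a * b)).eval x = (Φ.toFun a).eval ((Φ.toFun b).eval x) := by
  rw [Φ.map_mul', eval_comp]

lemma eval_pow_add (a : Fq[X]) (m n : ℕ) (x : K) :
    (Φ.toFun (a ^ (m + n))).eval x = (Φ.toFun (a ^ m)).eval ((Φ.toFun (a ^ n)).eval x) := by
  rw [pow_add, eval_mul]

lemma eval_zero (a : Fq[X]) : (Φ.toFun a).eval 0 = 0 := by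
  rw [← coeff_zero_eq_eval_zero, Φ.coeff_zero']

lemma alg_ne_zero {a : Fq[X]} (ha : a ≠ 0) : Φ.alg a ≠ 0 :=
  (map_ne_zero_iff _ Φ.alg_injective').2 ha

lemma card_le_of_coeff_ne_zero {a : Fq[X]} {i : ℕ} (hi : (Φ.toFun a).coeff i ≠ 0)
    (hi1 : i ≠ 1) : Fintype.card Fq ≤ i := by
  obtain ⟨k, rfl⟩ := Φ.supp_q_pow' a i hi
  exact Nat.le_self_pow (by rintro rfl; exact hi1 (pow_zero _)) _

lemma finite_setOf_isRoot {a : Fq[X]} (ha : a ≠ 0) : {x : K | (Φ.toFun a).IsRoot x}.Finite :=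
  Polynomial.finite_setOfPred_isRoot fun h => by simpa [h] using Φ.degree_pos' a ha

lemma exists_eval_pow_ne_zero_of_eval_pow_eq_zero {a : Fq[X]} {y : K} (hy : y ≠ 0) {m : ℕ}
    (hm : (Φ.toFun (a ^ m)).eval y = 0) :
    ∃ k, (Φ.toFun (a ^ k)).eval y ≠ 0 ∧
      (Φ.toFun a).eval ((Φ.toFun (a ^ k)).eval y) = 0 := by
  induction m with
  | zero => simp [Φ.map_one', hy] at hm
  | succ m ih =>
    by_cases h : (Φ.toFun (a ^ m)).eval y = 0
    · exact ih h
    · exact ⟨m, h, by rwa [← eval_mul, ← pow_succ']⟩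

variable {Φ} {v : AbsoluteValue K ℝ}

lemma abv_eval_sub_alg_mul_le (hna : IsNonarchimedean v) {a : Fq[X]}
    (ha : ∀ i, v ((Φ.toFun a).coeff i) ≤ 1) {x : K} (hx : v x ≤ 1) :
    v ((Φ.toFun a).eval x - Φ.alg a * x) ≤ v x ^ Fintype.card Fq := by
  have hsplit : (Φ.toFun a).eval x - Φ.alg a * x = ((Φ.toFun a).erase 1).eval x := by
    conv_lhs => rw [← monomial_add_erase (Φ.toFun a) 1]
    rw [eval_add, eval_monomial, Φ.coeff_one', pow_one, add_sub_cancel_left]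
  rw [hsplit, eval_eq_sum, sum_def]
  rcases ((Φ.toFun a).erase 1).support.eq_empty_or_nonempty with hempty | hne
  · rw [hempty, Finset.sum_empty, map_zero]
    positivity
  obtain ⟨i, hi, hle⟩ :=
    hna.finset_image_add_of_nonempty (fun n => ((Φ.toFun a).erase 1).coeff n * x ^ n) hne
  have hi1 : i ≠ 1 := by rintro rfl; simp at hi
  have hci := mem_support_iff.1 hi
  rw [erase_ne _ hi1] at hci hle
  calc _ ≤ v ((Φ.toFun a).coeff i) * v x ^ i := by rwa [map_mul, map_pow] at hle
    _ ≤ v x ^ i := mul_le_of_le_one_left (by positivity) (ha i)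
    _ ≤ v x ^ Fintype.card Fq :=
      pow_le_pow_of_le_one (v.nonneg x) hx (Φ.card_le_of_coeff_ne_zero hci hi1)

lemma abv_eval_le_max_mul (hna : IsNonarchimedean v) {a : Fq[X]}
    (ha : ∀ i, v ((Φ.toFun a).coeff i) ≤ 1) {x : K} (hx : v x ≤ 1) :
    v ((Φ.toFun a).eval x) ≤ max (v (Φ.alg a)) (v x ^ (Fintype.card Fq - 1)) * v x := by
  have hq : v x ^ Fintype.card Fq = v x ^ (Fintype.card Fq - 1) * v x := by
    rw [← pow_succ, Nat.sub_add_cancel Fintype.card_pos]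
  calc v ((Φ.toFun a).eval x)
      = v (((Φ.toFun a).eval x - Φ.alg a * x) + Φ.alg a * x) := by rw [sub_add_cancel]
    _ ≤ max (v ((Φ.toFun a).eval x - Φ.alg a * x)) (v (Φ.alg a * x)) := hna _ _
    _ ≤ max (v x ^ (Fintype.card Fq - 1) * v x) (v (Φ.alg a) * v x) :=
      max_le_max (hq ▸ abv_eval_sub_alg_mul_le hna ha hx) (map_mul v _ _).le
    _ = _ := by rw [max_mul_of_nonneg _ _ (v.nonneg x), max_comm]

lemma abv_eval_le (hna : IsNonarchimedean v) {a : Fq[X]}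
    (ha : ∀ i, v ((Φ.toFun a).coeff i) ≤ 1) {x : K} (hx : v x ≤ 1) :
    v ((Φ.toFun a).eval x) ≤ v x :=
  (abv_eval_le_max_mul hna ha hx).trans <| mul_le_of_le_one_left (v.nonneg x) <|
    max_le (Φ.coeff_one' a ▸ ha 1) (pow_le_one₀ (v.nonneg x) hx)

lemma abv_alg_le_of_eval_eq_zero (hna : IsNonarchimedean v) {a : Fq[X]}
    (ha : ∀ i, v ((Φ.toFun a).coeff i) ≤ 1) {x : K} (hx : v x ≤ 1) (hx0 : x ≠ 0)
    (hax : (Φ.toFun a).eval x = 0) :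
    v (Φ.alg a) ≤ v x ^ (Fintype.card Fq - 1) := by
  have h := abv_eval_sub_alg_mul_le hna ha hx
  rw [hax, zero_sub, v.map_neg, map_mul, ← Nat.sub_add_cancel Fintype.card_pos, pow_succ] at h
  exact le_of_mul_le_mul_right h (v.pos hx0)

lemma eq_zero_of_eval_eq_zero (hna : IsNonarchimedean v) {a : Fq[X]}
    (ha : ∀ i, v ((Φ.toFun a).coeff i) ≤ 1) (h1 : 1 ≤ v (Φ.alg a)) {x : K} (hx : v x < 1)
    (hax : (Φ.toFun a).eval x = 0) : x = 0 := by
  by_contra hx0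
  have := abv_alg_le_of_eval_eq_zero hna ha hx.le hx0 hax
  linarith [pow_lt_one₀ (v.nonneg x) hx (Nat.sub_ne_zero_of_lt (Fintype.one_lt_card (α := Fq)))]

lemma max_abv_alg_pow_le_one {a : Fq[X]} (ha : ∀ i, v ((Φ.toFun a).coeff i) ≤ 1) {s : ℝ}
    (hs0 : 0 ≤ s) (hs : s ≤ 1) : max (v (Φ.alg a)) (s ^ (Fintype.card Fq - 1)) ≤ 1 :=
  max_le (Φ.coeff_one' a ▸ ha 1) (pow_le_one₀ hs0 hs)

lemma abv_eval_pow_le (hna : IsNonarchimedean v) {a : Fq[X]}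
    (ha : ∀ i, v ((Φ.toFun a).coeff i) ≤ 1) {s : ℝ} (hs : s ≤ 1) {x : K} (hx : v x ≤ s)
    (n : ℕ) :
    v ((Φ.toFun (a ^ n)).eval x) ≤ max (v (Φ.alg a)) (s ^ (Fintype.card Fq - 1)) ^ n * v x := by
  set κ := max (v (Φ.alg a)) (s ^ (Fintype.card Fq - 1))
  have hκ0 : 0 ≤ κ := (v.nonneg _).trans (le_max_left _ _)
  have hκ1 : κ ≤ 1 := max_abv_alg_pow_le_one ha ((v.nonneg x).trans hx) hs
  induction n with
  | zero => simp [Φ.map_one']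
  | succ n ih =>
    set y := (Φ.toFun (a ^ n)).eval x
    have hys : v y ≤ s :=
      ih.trans <| (mul_le_of_le_one_left (v.nonneg x) (pow_le_one₀ hκ0 hκ1)).trans hx
    calc v ((Φ.toFun (a ^ (n + 1))).eval x) = v ((Φ.toFun a).eval y) := by
          rw [pow_succ', eval_mul]
      _ ≤ max (v (Φ.alg a)) (v y ^ (Fintype.card Fq - 1)) * v y :=
        abv_eval_le_max_mul hna ha (hys.trans hs)
      _ ≤ κ * (κ ^ n * v x) :=
        mul_le_mul (max_le_max le_rfl (pow_le_pow_left₀ (v.nonneg y) hys _)) ih (v.nonneg y) hκ0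
      _ = κ ^ (n + 1) * v x := by ring

lemma eval_pow_eq_zero_of_pow_lt (hna : IsNonarchimedean v) {a : Fq[X]}
    (ha : ∀ i, v ((Φ.toFun a).coeff i) ≤ 1) {s : ℝ} (hs : s ≤ 1) {x : K} (hx : v x ≤ s)
    {N : ℕ} (hN : max (v (Φ.alg a)) (s ^ (Fintype.card Fq - 1)) ^ N < v (Φ.alg a)) {m : ℕ}
    (hm : (Φ.toFun (a ^ m)).eval x = 0) : (Φ.toFun (a ^ N)).eval x = 0 := by
  set κ := max (v (Φ.alg a)) (s ^ (Fintype.card Fq - 1))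
  by_contra hy
  have hmy : (Φ.toFun (a ^ m)).eval ((Φ.toFun (a ^ N)).eval x) = 0 := by
    rw [← eval_pow_add, add_comm, eval_pow_add, hm, eval_zero]
  obtain ⟨k, hz0, hz⟩ := Φ.exists_eval_pow_ne_zero_of_eval_pow_eq_zero hy hmy
  rw [← eval_pow_add] at hz0 hz
  set z := (Φ.toFun (a ^ (k + N))).eval x
  have hκ0 : 0 ≤ κ := (v.nonneg _).trans (le_max_left _ _)
  have hκ1 : κ ≤ 1 := max_abv_alg_pow_le_one ha ((v.nonneg x).trans hx) hs
  have hzκ : v z ≤ κ ^ N :=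
    calc v z ≤ κ ^ (k + N) * v x := abv_eval_pow_le hna ha hs hx _
      _ ≤ κ ^ (k + N) := mul_le_of_le_one_right (pow_nonneg hκ0 _) (hx.trans hs)
      _ ≤ κ ^ N := pow_le_pow_of_le_one hκ0 hκ1 (Nat.le_add_left _ _)
  have hz1 : v z ≤ 1 := hzκ.trans (pow_le_one₀ hκ0 hκ1)
  have := (abv_alg_le_of_eval_eq_zero hna ha hz1 hz0 hz).trans
    (pow_le_of_le_one (v.nonneg z) hz1 (Nat.sub_ne_zero_of_lt Fintype.one_lt_card))
  linarith

lemma exists_eval_pow_eq_zero_of_eval_eq_zero (hna : IsNonarchimedean v)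
    (hgood : ∀ a i, v ((Φ.toFun a).coeff i) ≤ 1) {P : Fq[X]}
    (hP : ∀ a, v (Φ.alg a) < 1 ↔ P ∣ a) {Q : Fq[X]} (hQ : Q ≠ 0) {x : K} (hx : v x < 1)
    (hQx : (Φ.toFun Q).eval x = 0) : ∃ m, (Φ.toFun (P ^ m)).eval x = 0 := by
  have hPu : ¬IsUnit P := fun h => by simpa using (hP 1).2 h.dvd
  obtain ⟨m, R, hR, rfl⟩ := WfDvdMonoid.max_power_factor' hQ hPu
  refine ⟨m, eq_zero_of_eval_eq_zero hna (hgood R) (not_lt.1 (hR ∘ (hP R).1))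
    ((abv_eval_le hna (hgood _) hx.le).trans_lt hx) ?_⟩
  rwa [← eval_mul, mul_comm]

end DrinfeldModuleData

open DrinfeldModuleData in
theorem stmt_4_general (Fq K : Type*) [Field Fq] [Fintype Fq] [Field K]
    (Φ : DrinfeldModuleData Fq K)
    (v : AbsoluteValue K ℝ)
    (hna : ∀ x y : K, v (x + y) ≤ max (v x) (v y))
    (hgood : ∀ (a : Polynomial Fq) (i : ℕ), v ((Φ.toFun a).coeff i) ≤ 1)
    (s : ℝ) (hs0 : 0 < s) (hs1 : s < 1) :
    {x : K | (∃ Q : Polynomial Fq, Q ≠ 0 ∧ (Φ.toFun Q).eval x = 0) ∧ v x < s}.Finite := by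
  obtain ⟨P, hP⟩ := exists_dvd_iff_abv_lt_one hna Φ.alg fun a => Φ.coeff_one' a ▸ hgood a 1
  rcases eq_or_ne P 0 with rfl | hP0
  · refine (Set.finite_singleton 0).subset ?_
    rintro x ⟨⟨Q, hQ, hQx⟩, hxs⟩
    exact eq_zero_of_eval_eq_zero hna (hgood Q)
      (not_lt.1 fun h => hQ (zero_dvd_iff.1 ((hP Q).1 h))) (hxs.trans hs1) hQx
  have hκ : max (v (Φ.alg P)) (s ^ (Fintype.card Fq - 1)) < 1 :=
    max_lt ((hP P).2 dvd_rfl) <|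
      pow_lt_one₀ hs0.le hs1 (Nat.sub_ne_zero_of_lt Fintype.one_lt_card)
  obtain ⟨N, hN⟩ := exists_pow_lt_of_lt_one (v.pos (Φ.alg_ne_zero hP0)) hκ
  refine (Φ.finite_setOf_isRoot (pow_ne_zero N hP0)).subset ?_
  rintro x ⟨⟨Q, hQ, hQx⟩, hxs⟩
  obtain ⟨m, hm⟩ := exists_eval_pow_eq_zero_of_eval_eq_zero hna hgood hP hQ (hxs.trans hs1) hQx
  exact eval_pow_eq_zero_of_pow_lt hna (hgood P) hs1.le hxs.le hN hm

/-- Let `Φ` be a Drinfeld module of generic characteristic in normal form with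
good reduction at a finite place `v` (all coefficients of each `Φ_a` are `v`-integral and
leading coefficients are `v`-adic units, in particular `Φ_t` monic). For any real `s` with
`0 < s < 1` there are at most finitely many torsion points `x` with `|x|_v < s`. -/
theorem stmt_4 (Fq K : Type*) [Field Fq] [Fintype Fq] [Field K]
    (Φ : DrinfeldModuleData Fq K)
    (v : AbsoluteValue K ℝ)
    (hna : ∀ x y : K, v (x + y) ≤ max (v x) (v y))
    (hgood : ∀ (a : Polynomial Fq) (i : ℕ), v ((Φ.toFun a).coeff i) ≤ 1)
    (hmonic : ∀ a : Polynomial Fq, a ≠ 0 → v ((Φ.toFun a).leadingCoeff) = 1)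
    (s : ℝ) (hs0 : 0 < s) (hs1 : s < 1) :
    {x : K | (∃ Q : Polynomial Fq, Q ≠ 0 ∧ (Φ.toFun Q).eval x = 0) ∧ v x < s}.Finite :=
  stmt_4_general Fq K Φ v hna hgood s hs0 hs1
end

section
/- Let Φ be a Drinfeld module of generic characteristic over K with canonical height ĥ_Φ, and suppose there is a constant C > 0 with |h(z) − ĥ_Φ(z)| ≤ C for all z ∈ K̄, where h is the Weil height. Let β ∈ K with ĥ_Φ(β) > 0 (β nontorsion). For each n ≥ 1 let x_n ∈ K^sep satisfy Φ_{t^n}(x_n) · (x_n − β) = 1. Then ĥ_Φ(x_n) ≤ (h(β) + 2C + O(1))/q^{rn}, and in particular ĥ_Φ(x_n) → 0 as n → ∞. -/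
/-! With `y = Φ_{t^n}(x_n)` we have `y⁻¹ = x_n - β`, so `h(y) = h(x_n - β) ≤ h(x_n) + h(β) + C'`.
Passing to canonical heights costs `2C`, and `ĥ(y) = q^{rn} ĥ(x_n)` gives
`(q^{rn} - 1) ĥ(x_n) ≤ h(β) + 2C + C'`. As `q^{rn} - 1 ≥ q^{rn} / 2`, we get
`ĥ(x_n) ≤ 2 (h(β) + 2C + C') / q^{rn}`, which tends to `0`. -/

section Heights

variable {K : Type*} {h hhat : K → ℝ} {C C' : ℝ}

theorem le_add_of_abs_sub_le (hclose : ∀ z, |h z - hhat z| ≤ C) (z : K) : hhat z ≤ h z + C := by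
  linarith [(abs_le.mp (hclose z)).1]

theorem le_add_of_abs_sub_le' (hclose : ∀ z, |h z - hhat z| ≤ C) (z : K) : h z ≤ hhat z + C := by
  linarith [(abs_le.mp (hclose z)).2]

variable [Field K]

theorem hhat_le_add_of_mul_sub_eq_one (hclose : ∀ z, |h z - hhat z| ≤ C)
    (hinv : ∀ w : K, w ≠ 0 → h w⁻¹ = h w) {β : K} (hsub : ∀ w : K, h (w - β) ≤ h w + h β + C')
    {x y : K} (hxy : y * (x - β) = 1) : hhat y ≤ hhat x + (h β + 2 * C + C') := by
  calc hhat y ≤ h y + C := le_add_of_abs_sub_le hclose y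
    _ = h (x - β) + C := by
      rw [← inv_eq_of_mul_eq_one_right hxy, hinv y (left_ne_zero_of_mul_eq_one hxy)]
    _ ≤ h x + h β + C' + C := by gcongr; exact hsub x
    _ ≤ hhat x + (h β + 2 * C + C') := by linarith [le_add_of_abs_sub_le' hclose x]

end Heights

theorem le_two_mul_div_of_mul_le_add {Q a A : ℝ} (hQ : 2 ≤ Q) (ha : 0 ≤ a) (h : Q * a ≤ a + A) :
    a ≤ 2 * A / Q := by
  rw [le_div_iff₀ (by linarith)]
  nlinarith

theorem tendsto_const_div_pow_mul_atTop {q : ℝ} (hq : 1 < q) {r : ℕ} (hr : 1 ≤ r) (c : ℝ) :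
    Filter.Tendsto (fun n : ℕ => c / q ^ (r * n)) Filter.atTop (nhds 0) := by
  simp_rw [pow_mul]
  exact tendsto_const_nhds.div_atTop
    (tendsto_pow_atTop_atTop_of_one_lt (one_lt_pow₀ hq (by omega)))

theorem stmt_12_general (Fq K : Type*) [Field Fq] [Fintype Fq] [Field K]
    (Φ : DrinfeldModuleData Fq K) (r : ℕ) (hr : 1 ≤ r)
    (h hhat : K → ℝ) (hhat_nonneg : ∀ z, 0 ≤ hhat z)
    (C : ℝ) (hclose : ∀ z : K, |h z - hhat z| ≤ C)
    (hfunc : ∀ (z : K) (n : ℕ),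
      hhat ((Φ.toFun (Polynomial.X ^ n)).eval z) = (Fintype.card Fq : ℝ) ^ (r * n) * hhat z)
    (hinv : ∀ w : K, w ≠ 0 → h w⁻¹ = h w)
    (β : K)
    (C' : ℝ) (hC' : 0 ≤ C') (hsub : ∀ w : K, h (w - β) ≤ h w + h β + C')
    (x : ℕ → K)
    (hx : ∀ n : ℕ, 1 ≤ n → (Φ.toFun (Polynomial.X ^ n)).eval (x n) * (x n - β) = 1) :
    (∃ C'' : ℝ, 0 ≤ C'' ∧ ∀ n : ℕ, 1 ≤ n →
        hhat (x n) ≤ (h β + 2 * C + C'') / (Fintype.card Fq : ℝ) ^ (r * n)) ∧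
      Filter.Tendsto (fun n => hhat (x n)) Filter.atTop (nhds 0) := by
  set A := h β + 2 * C + C'
  have hq2 : (2 : ℝ) ≤ Fintype.card Fq := mod_cast Fintype.one_lt_card (α := Fq)
  have hbound : ∀ n, 1 ≤ n → hhat (x n) ≤ 2 * A / (Fintype.card Fq : ℝ) ^ (r * n) := by
    intro n hn
    refine le_two_mul_div_of_mul_le_add ?_ (hhat_nonneg _) ?_
    · exact hq2.trans (le_self_pow₀ (by linarith) (by positivity))
    · rw [← hfunc]
      exact hhat_le_add_of_mul_sub_eq_one hclose hinv hsub (hx n hn)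
  have hC : 0 ≤ C := (abs_nonneg _).trans (hclose β)
  have hβC : 0 ≤ h β + C := by linarith [le_add_of_abs_sub_le hclose β, hhat_nonneg β]
  refine ⟨⟨A + C', by linarith, fun n hn => (hbound n hn).trans_eq (by ring)⟩, ?_⟩
  refine squeeze_zero' (.of_forall fun n => hhat_nonneg (x n)) ?_
    (tendsto_const_div_pow_mul_atTop (q := Fintype.card Fq) (by linarith) hr (2 * A))
  filter_upwards [Filter.eventually_ge_atTop 1] with n hn using hbound n hn

/-- Let `Φ` be a Drinfeld module of rank `r` over `K` with canonical height
`ĥ_Φ` satisfying `|h − ĥ_Φ| ≤ C` and `ĥ_Φ(Φ_{t^n}(z)) = q^{rn}·ĥ_Φ(z)`, where the Weil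
height `h` satisfies `h(1/w) = h(w)` and `h(w − β) ≤ h(w) + h(β) + O(1)`. Let `β` be
nontorsion (`ĥ_Φ(β) > 0`) and for each `n ≥ 1` let `x_n` satisfy
`Φ_{t^n}(x_n)·(x_n − β) = 1`. Then `ĥ_Φ(x_n) ≤ (h(β) + 2C + O(1))/q^{rn}`, and in
particular `ĥ_Φ(x_n) → 0`. -/
theorem stmt_12 (Fq K : Type*) [Field Fq] [Fintype Fq] [Field K]
    (Φ : DrinfeldModuleData Fq K) (r : ℕ) (hr : 1 ≤ r)
    (h hhat : K → ℝ) (hhat_nonneg : ∀ z, 0 ≤ hhat z)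
    (C : ℝ) (hC : 0 < C) (hclose : ∀ z : K, |h z - hhat z| ≤ C)
    (hfunc : ∀ (z : K) (n : ℕ),
      hhat ((Φ.toFun (Polynomial.X ^ n)).eval z) = (Fintype.card Fq : ℝ) ^ (r * n) * hhat z)
    (hinv : ∀ w : K, w ≠ 0 → h w⁻¹ = h w)
    (β : K) (hβ : 0 < hhat β)
    (C' : ℝ) (hC' : 0 ≤ C') (hsub : ∀ w : K, h (w - β) ≤ h w + h β + C')
    (x : ℕ → K)
    (hx : ∀ n : ℕ, 1 ≤ n → (Φ.toFun (Polynomial.X ^ n)).eval (x n) * (x n - β) = 1) :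
    (∃ C'' : ℝ, 0 ≤ C'' ∧ ∀ n : ℕ, 1 ≤ n →
        hhat (x n) ≤ (h β + 2 * C + C'') / (Fintype.card Fq : ℝ) ^ (r * n)) ∧
      Filter.Tendsto (fun n => hhat (x n)) Filter.atTop (nhds 0) :=
  stmt_12_general Fq K Φ r hr h hhat hhat_nonneg C hclose hfunc hinv β C' hC' hsub x hx
end

section
/- Let Φ be the Carlitz module Φ_t(x) = tx + x^p over F_p(t), let n ≥ 1, and let x ∈ F_p(t)^sep satisfy Φ_{t^n}(x)·(x − 1) = 1. Then for every finite place v of F_p(t) (i.e., v ≠ v_∞) and every Galois conjugate x^σ of x: |x^σ|_v ≤ 1 and |x^σ − 1|_v = 1. In particular x is {v_∞}-integral with respect to 1. -/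
/-!
Over a finite place the Carlitz polynomial `T y + y ^ p` has `v`-integral coefficients and is
monic of degree `p ≥ 2`, so every iterate `Φ m` maps the closed unit disc into itself and sends
`|y|_v > 1` to `|Φ m y|_v > 1`. If `|x|_v > 1` then both `Φ n x` and `x - 1` lie outside the unit
disc, which contradicts `Φ n x * (x - 1) = 1`. Hence `|x|_v ≤ 1`, so both factors have absolute
value at most `1`, and their product being `1` forces `|x - 1|_v = 1`.
-/

section CarlitzIterate

variable {L : Type*} [Field L] {v : AbsoluteValue L ℝ} {T : L} {p : ℕ}

lemma abv_mul_add_pow_of_one_lt (hna : IsNonarchimedean v) (hT : v T ≤ 1) (hp : 2 ≤ p) {y : L}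
    (hy : 1 < v y) : v (T * y + y ^ p) = v y ^ p := by
  have hlt : v (T * y) < v (y ^ p) :=
    calc v (T * y) = v T * v y := map_mul v T y
      _ ≤ v y := mul_le_of_le_one_left (v.nonneg y) hT
      _ < v y ^ p := lt_self_pow₀ hy (by omega)
      _ = v (y ^ p) := (map_pow v y p).symm
  rw [hna.add_eq_right_of_lt hlt, map_pow]

lemma abv_mul_add_pow_le_one (hna : IsNonarchimedean v) (hT : v T ≤ 1) {y : L} (hy : v y ≤ 1) :
    v (T * y + y ^ p) ≤ 1 := by
  refine (hna _ _).trans (max_le ?_ ?_)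
  · rw [map_mul]
    exact mul_le_one₀ hT (v.nonneg y) hy
  · rw [map_pow]
    exact pow_le_one₀ (v.nonneg y) hy

variable {Φ : ℕ → L → L} (hΦ0 : ∀ x : L, Φ 0 x = x)
  (hΦs : ∀ (n : ℕ) (x : L), Φ (n + 1) x = T * Φ n x + (Φ n x) ^ p)
include hΦ0 hΦs

lemma one_lt_abv_iterate (hna : IsNonarchimedean v) (hT : v T ≤ 1) (hp : 2 ≤ p) {x : L}
    (hx : 1 < v x) (m : ℕ) : 1 < v (Φ m x) := by
  induction m with
  | zero => rwa [hΦ0]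
  | succ k ih =>
    rw [hΦs, abv_mul_add_pow_of_one_lt hna hT hp ih]
    exact one_lt_pow₀ ih (by omega)

lemma abv_iterate_le_one (hna : IsNonarchimedean v) (hT : v T ≤ 1) {x : L} (hx : v x ≤ 1)
    (m : ℕ) : v (Φ m x) ≤ 1 := by
  induction m with
  | zero => rwa [hΦ0]
  | succ k ih =>
    rw [hΦs]
    exact abv_mul_add_pow_le_one hna hT ih

end CarlitzIterate

theorem stmt_14_general (p : ℕ) (hp : p.Prime) (L : Type*) [Field L]
    (v : AbsoluteValue L ℝ)
    (hna : ∀ x y : L, v (x + y) ≤ max (v x) (v y))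
    (T : L) (hT : v T ≤ 1)
    (Φ : ℕ → L → L)
    (hΦ0 : ∀ x : L, Φ 0 x = x)
    (hΦs : ∀ (n : ℕ) (x : L), Φ (n + 1) x = T * Φ n x + (Φ n x) ^ p)
    (n : ℕ) (x : L) (hx : Φ n x * (x - 1) = 1) :
    v x ≤ 1 ∧ v (x - 1) = 1 := by
  have hprod : v (Φ n x) * v (x - 1) = 1 := by rw [← map_mul, hx, map_one]
  have hx_le : v x ≤ 1 := by
    by_contra! hx_gt
    have hΦ_gt := one_lt_abv_iterate hΦ0 hΦs hna hT hp.two_le hx_gt n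
    have hsub : v (x - 1) = v x := by
      rw [sub_eq_add_neg]
      exact IsNonarchimedean.add_eq_left_of_lt hna (by simpa using hx_gt)
    nlinarith
  have hΦ_le := abv_iterate_le_one hΦ0 hΦs hna hT hx_le n
  have hsub_le : v (x - 1) ≤ 1 := by
    rw [sub_eq_add_neg]
    exact (hna _ _).trans (max_le hx_le (by simp))
  refine ⟨hx_le, le_antisymm hsub_le ?_⟩
  nlinarith [v.nonneg (x - 1)]

/-- Let `Φ_t(y) = T·y + y^p` be the Carlitz module (with `T` the image of
`t`), let `v` be a finite place (so `|T|_v ≤ 1`), let `n ≥ 1`, and let `x` satisfy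
`Φ_{t^n}(x)·(x − 1) = 1`. Then `|x|_v ≤ 1` and `|x − 1|_v = 1`. (Applied to each Galois
conjugate `x^σ`—which satisfies the same equation—this says `x` is `{v_∞}`-integral with
respect to `1`.) -/
theorem stmt_14 (p : ℕ) (hp : p.Prime) (L : Type*) [Field L]
    (v : AbsoluteValue L ℝ)
    (hna : ∀ x y : L, v (x + y) ≤ max (v x) (v y))
    (T : L) (hT : v T ≤ 1)
    (Φ : ℕ → L → L)
    (hΦ0 : ∀ x : L, Φ 0 x = x)
    (hΦs : ∀ (n : ℕ) (x : L), Φ (n + 1) x = T * Φ n x + (Φ n x) ^ p)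
    (n : ℕ) (hn : 1 ≤ n) (x : L) (hx : Φ n x * (x - 1) = 1) :
    v x ≤ 1 ∧ v (x - 1) = 1 :=
  stmt_14_general p hp L v hna T hT Φ hΦ0 hΦs n x hx
end

section
/- Let Φ be a Drinfeld module over K in normal form with good reduction at all finite places, let v be a finite place of K, let β ∈ K with |β|_v = 1, and let (γ_n) be an infinite sequence of distinct torsion points of Φ. Then lim_{n→∞} (1/[K(γ_n):K]) Σ_{σ} log|β − γ_n^σ|_v = 0, where the sum runs over the embeddings σ : K(γ_n) → K^sep. -/
/-!
Torsion points are integral at `v` because the leading coefficients of the `Φ_a` are units, so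
every term of the average is `≤ 0`. Conversely, `Φ_a(x) ≡ a·x` modulo `x²` on the unit disc, so
a torsion point of absolute value `≤ s < 1` is killed by `P ^ k₀`, where `P` generates the ideal
`{a | |a|_v < 1}` of `𝔽_q[T]` and `k₀` depends only on `s`. Translating by a torsion point,
only finitely many torsion points lie within `s` of `β`; they meet only finitely many
conjugacy classes, hence only finitely many `γ_n`, and for all other `n` every term is
`≥ log s`.
-/

open Polynomial Filter Topology

namespace IsNonarchimedean

variable {L : Type*} [Field L] {v : AbsoluteValue L ℝ}

theorem apply_sum_le_of_forall_le (hv : IsNonarchimedean v) {ι : Type*} {s : Finset ι}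
    {f : ι → L} {B : ℝ} (hB : 0 ≤ B) (hf : ∀ i ∈ s, v (f i) ≤ B) : v (∑ i ∈ s, f i) ≤ B :=
  Finset.sum_induction f (fun y => v y ≤ B) (fun a b ha hb => (hv a b).trans (max_le ha hb))
    (by simpa using hB) hf

theorem apply_sub_le (hv : IsNonarchimedean v) (x y : L) : v (x - y) ≤ max (v x) (v y) := by
  simpa only [sub_eq_add_neg, v.map_neg] using hv x (-y)

theorem abv_eval_sub_coeff_one_mul_le (hv : IsNonarchimedean v) {p : L[X]}
    (hp : ∀ i, v (p.coeff i) ≤ 1) (hp0 : p.coeff 0 = 0) {x : L} (hx : v x ≤ 1) :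
    v (p.eval x - p.coeff 1 * x) ≤ v x ^ 2 := by
  have hsum : p.eval x - p.coeff 1 * x =
      ∑ i ∈ Finset.range p.natDegree, p.coeff (i + 2) * x ^ (i + 2) := by
    rw [eval_eq_sum_range' (n := p.natDegree + 2) (by omega), Finset.sum_range_succ',
      Finset.sum_range_succ', hp0]
    ring
  rw [hsum]
  refine hv.apply_sum_le_of_forall_le (by positivity) fun i _ => ?_
  calc v (p.coeff (i + 2) * x ^ (i + 2)) = v (p.coeff (i + 2)) * v x ^ (i + 2) := by
        rw [v.map_mul, v.map_pow]
    _ ≤ 1 * v x ^ 2 :=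
        mul_le_mul (hp _) (pow_le_pow_of_le_one (v.nonneg x) hx (by omega)) (by positivity)
          zero_le_one
    _ = v x ^ 2 := one_mul _

theorem abv_le_one_of_isRoot (hv : IsNonarchimedean v) {p : L[X]}
    (hp : ∀ i, v (p.coeff i) ≤ 1) (hlead : v p.leadingCoeff = 1) {x : L} (hx : p.IsRoot x) :
    v x ≤ 1 := by
  by_contra! h
  have hdom : v (p.eval x) = v (p.leadingCoeff * x ^ p.natDegree) := by
    rw [eval_eq_sum_range]
    refine hv.apply_sum_eq_of_lt (fun a => (v.map_neg a).symm)
      (Finset.self_mem_range_succ _) fun j hj hjd => ?_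
    have hjd : j < p.natDegree := by
      have := Finset.mem_range.mp hj
      omega
    calc v (p.coeff j * x ^ j) ≤ 1 * v x ^ j := by
          rw [v.map_mul, v.map_pow]
          exact mul_le_mul_of_nonneg_right (hp j) (by positivity)
      _ < v x ^ p.natDegree := by rw [one_mul]; exact pow_lt_pow_right₀ h hjd
      _ = v (p.leadingCoeff * x ^ p.natDegree) := by rw [v.map_mul, v.map_pow, hlead, one_mul]
  rw [hx.eq_zero, v.map_zero, v.map_mul, v.map_pow, hlead, one_mul] at hdom
  exact (pow_pos (zero_lt_one.trans h) _).ne hdom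

theorem exists_forall_not_dvd_abv_eq_one (hv : IsNonarchimedean v) {R : Type*} [CommRing R]
    [IsPrincipalIdealRing R] (f : R →+* L) (hf : ∀ a, v (f a) ≤ 1) :
    ∃ P : R, ¬IsUnit P ∧ v (f P) < 1 ∧ ∀ a, ¬P ∣ a → v (f a) = 1 := by
  let I : Ideal R :=
    { carrier := {a | v (f a) < 1}
      add_mem' := fun {a b} ha hb => by
        simp only [Set.mem_ofPred_eq, map_add] at ha hb ⊢
        exact (hv _ _).trans_lt (max_lt ha hb)
      zero_mem' := by simp
      smul_mem' := fun c a ha => by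
        simp only [Set.mem_ofPred_eq, smul_eq_mul, map_mul, v.map_mul] at ha ⊢
        nlinarith [hf c, v.nonneg (f a)] }
  have hPI := Submodule.IsPrincipal.generator_mem I
  refine ⟨Submodule.IsPrincipal.generator I, fun hu => ?_, hPI, fun a ha => ?_⟩
  · have h1 : (1 : R) ∈ I := (I.eq_top_of_isUnit_mem hPI hu) ▸ Submodule.mem_top
    simp [I] at h1
  · have : a ∉ I := fun h => ha ((Submodule.IsPrincipal.mem_iff_generator_dvd I).mp h)
    exact le_antisymm (hf a) (not_lt.mp this)

end IsNonarchimedean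

namespace DrinfeldModuleData

variable {Fq K : Type*} [Field Fq] [Fintype Fq] [Field K] (Φ : DrinfeldModuleData Fq K)

theorem toFun_ne_zero {a : Fq[X]} (ha : a ≠ 0) : Φ.toFun a ≠ 0 := fun h => by
  simpa [h] using Φ.degree_pos' a ha

section Algebra

variable {L : Type*} [CommRing L] [Nontrivial L] [Algebra K L]

theorem aeval_toFun_add (a : Fq[X]) (x y : L) :
    aeval (x + y) (Φ.toFun a) = aeval x (Φ.toFun a) + aeval y (Φ.toFun a) := by
  have : CharP L (ringChar Fq) := charP_of_injective_ringHom
    (f := ((algebraMap K L).comp Φ.alg).comp C)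
    (((algebraMap K L).injective.comp Φ.alg_injective').comp C_injective) _
  have : Fact (ringChar Fq).Prime := ⟨CharP.char_is_prime Fq _⟩
  obtain ⟨n, -, hq⟩ := FiniteField.card Fq (ringChar Fq)
  simp only [aeval_eq_sum_range, ← Finset.sum_add_distrib, ← smul_add]
  refine Finset.sum_congr rfl fun i _ => ?_
  by_cases hi : (Φ.toFun a).coeff i = 0
  · simp [hi]
  obtain ⟨k, rfl⟩ := Φ.supp_q_pow' a i hi
  rw [hq, ← pow_mul, add_pow_char_pow]

/-- Additive because `Φ_a` only has monomials of `q`-power degree. -/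
noncomputable def act (a : Fq[X]) : L →+ L :=
  AddMonoidHom.mk' (fun x => aeval x (Φ.toFun a)) (Φ.aeval_toFun_add a)

theorem act_apply (a : Fq[X]) (x : L) : Φ.act a x = aeval x (Φ.toFun a) := rfl

theorem act_mul (a b : Fq[X]) (x : L) : Φ.act (a * b) x = Φ.act a (Φ.act b x) := by
  simp only [act_apply, Φ.map_mul', aeval_comp]

theorem act_one (x : L) : Φ.act 1 x = x := by
  simp only [act_apply, Φ.map_one', aeval_X]

def IsTorsion (x : L) : Prop := ∃ a ≠ 0, Φ.act a x = 0

variable {Φ}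

theorem IsTorsion.sub {x y : L} (hx : Φ.IsTorsion x) (hy : Φ.IsTorsion y) :
    Φ.IsTorsion (x - y) := by
  obtain ⟨a, ha, hax⟩ := hx
  obtain ⟨b, hb, hby⟩ := hy
  refine ⟨b * a, mul_ne_zero hb ha, ?_⟩
  rw [map_sub, act_mul, hax, map_zero, mul_comm, act_mul, hby, map_zero, sub_zero]

end Algebra

section Field

variable {L : Type*} [Field L] [Algebra K L]

theorem finite_setOf_act_eq_zero {a : Fq[X]} (ha : a ≠ 0) :
    {x : L | Φ.act a x = 0}.Finite :=
  ((Φ.toFun a).rootSet L).toFinite.subset fun _ hx =>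
    (mem_rootSet.mpr ⟨Φ.toFun_ne_zero ha, hx⟩)

variable {Φ}

theorem IsTorsion.isIntegral {x : L} (hx : Φ.IsTorsion x) : IsIntegral K x := by
  obtain ⟨a, ha, hax⟩ := hx
  exact IsAlgebraic.isIntegral ⟨Φ.toFun a, Φ.toFun_ne_zero ha, hax⟩

theorem IsTorsion.of_isConjRoot {x y : L} (hx : Φ.IsTorsion x) (hxy : IsConjRoot K x y) :
    Φ.IsTorsion y := by
  obtain ⟨a, ha, hax⟩ := hx
  exact ⟨a, ha, aeval_eq_zero_of_dvd_aeval_eq_zero (minpoly.dvd K x hax) hxy.aeval_eq_zero⟩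

end Field

section Abv

variable {L : Type*} [Field L] [Algebra K L] {v : AbsoluteValue L ℝ}

/-- The integrality half of good reduction at `v`. -/
def IsIntegralAt (v : AbsoluteValue L ℝ) : Prop :=
  ∀ a i, v (algebraMap K L ((Φ.toFun a).coeff i)) ≤ 1

variable {Φ}

theorem IsIntegralAt.abv_alg_le_one (hΦ : Φ.IsIntegralAt v) (a : Fq[X]) :
    v (algebraMap K L (Φ.alg a)) ≤ 1 :=
  Φ.coeff_one' a ▸ hΦ a 1

theorem IsIntegralAt.abv_act_sub_le (hΦ : Φ.IsIntegralAt v) (hv : IsNonarchimedean v)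
    (a : Fq[X]) {x : L} (hx : v x ≤ 1) :
    v (Φ.act a x - algebraMap K L (Φ.alg a) * x) ≤ v x ^ 2 := by
  have h := hv.abv_eval_sub_coeff_one_mul_le (p := (Φ.toFun a).map (algebraMap K L))
    (fun i => by rw [coeff_map]; exact hΦ a i) (by rw [coeff_map, Φ.coeff_zero', map_zero]) hx
  rwa [eval_map_algebraMap, coeff_map, Φ.coeff_one'] at h

theorem IsIntegralAt.abv_act_le (hΦ : Φ.IsIntegralAt v) (hv : IsNonarchimedean v)
    (a : Fq[X]) {x : L} (hx : v x ≤ 1) :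
    v (Φ.act a x) ≤ v x * max (v (algebraMap K L (Φ.alg a))) (v x) := by
  set α := algebraMap K L (Φ.alg a)
  calc v (Φ.act a x) = v ((Φ.act a x - α * x) + α * x) := by rw [sub_add_cancel]
    _ ≤ max (v x ^ 2) (v α * v x) :=
        (hv _ _).trans (max_le_max (hΦ.abv_act_sub_le hv a hx) (v.map_mul _ _).le)
    _ = v x * max (v α) (v x) := by
        rw [mul_max_of_nonneg _ _ (v.nonneg x), max_comm, sq, mul_comm (v α)]

theorem IsIntegralAt.abv_act_le_abv (hΦ : Φ.IsIntegralAt v) (hv : IsNonarchimedean v)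
    (a : Fq[X]) {x : L} (hx : v x ≤ 1) : v (Φ.act a x) ≤ v x :=
  (hΦ.abv_act_le hv a hx).trans
    (mul_le_of_le_one_right (v.nonneg x) (max_le (hΦ.abv_alg_le_one a) hx))

theorem IsIntegralAt.abv_alg_le_of_act_eq_zero (hΦ : Φ.IsIntegralAt v)
    (hv : IsNonarchimedean v) {a : Fq[X]} {x : L} (hax : Φ.act a x = 0) (hx0 : x ≠ 0)
    (hx : v x ≤ 1) : v (algebraMap K L (Φ.alg a)) ≤ v x := by
  have h := hΦ.abv_act_sub_le hv a hx
  rw [hax, zero_sub, v.map_neg, v.map_mul, sq] at h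
  exact le_of_mul_le_mul_right h (v.pos hx0)

theorem IsTorsion.abv_le_one (hΦ : Φ.IsIntegralAt v) (hv : IsNonarchimedean v)
    (hmonic : ∀ a : Fq[X], a ≠ 0 → v (algebraMap K L (Φ.toFun a).leadingCoeff) = 1)
    {x : L} (hx : Φ.IsTorsion x) : v x ≤ 1 := by
  obtain ⟨a, ha, hax⟩ := hx
  refine hv.abv_le_one_of_isRoot (p := (Φ.toFun a).map (algebraMap K L))
    (fun i => by rw [coeff_map]; exact hΦ a i) (by rw [leadingCoeff_map]; exact hmonic a ha) ?_
  rwa [IsRoot, eval_map_algebraMap]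

theorem IsIntegralAt.abv_act_pow_le (hΦ : Φ.IsIntegralAt v) (hv : IsNonarchimedean v)
    {P : Fq[X]} {c : ℝ} (hPc : v (algebraMap K L (Φ.alg P)) ≤ c) (hc : c ≤ 1) {x : L}
    (hx : v x ≤ c) (k : ℕ) : v (Φ.act (P ^ k) x) ≤ c ^ (k + 1) := by
  have hc0 : 0 ≤ c := (v.nonneg x).trans hx
  induction k with
  | zero => simpa [act_one] using hx
  | succ k ih =>
    have hck : c ^ (k + 1) ≤ c := pow_le_of_le_one hc0 hc (by omega)
    rw [pow_succ', act_mul]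
    calc v (Φ.act P (Φ.act (P ^ k) x))
        ≤ v (Φ.act (P ^ k) x) * max (v (algebraMap K L (Φ.alg P))) (v (Φ.act (P ^ k) x)) :=
          hΦ.abv_act_le hv P (ih.trans (hck.trans hc))
      _ ≤ c ^ (k + 1) * c :=
          mul_le_mul ih (max_le hPc (ih.trans hck)) (le_max_of_le_right (v.nonneg _))
            (by positivity)
      _ = c ^ (k + 1 + 1) := (pow_succ c _).symm

/-- Above level `k₀`, `Φ_P` would have a nonzero root smaller than `v (Φ.alg P)`. -/
theorem IsIntegralAt.act_pow_eq_zero_of_pow_lt (hΦ : Φ.IsIntegralAt v)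
    (hv : IsNonarchimedean v) {P : Fq[X]} {c : ℝ} (hPc : v (algebraMap K L (Φ.alg P)) ≤ c)
    (hc : c ≤ 1) {k₀ : ℕ} (hk₀ : c ^ k₀ < v (algebraMap K L (Φ.alg P))) {x : L}
    (hx : v x ≤ c) {k : ℕ} (hk : Φ.act (P ^ k) x = 0) : Φ.act (P ^ k₀) x = 0 := by
  have hc0 : 0 ≤ c := (v.nonneg x).trans hx
  have hdesc : ∀ j, Φ.act (P ^ (k₀ + j)) x = 0 → Φ.act (P ^ k₀) x = 0 := by
    intro j
    induction j with
    | zero => exact id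
    | succ j ih =>
      intro hj
      refine ih (not_not.mp fun hy => ?_)
      have hPy : Φ.act P (Φ.act (P ^ (k₀ + j)) x) = 0 := by rwa [← act_mul, ← pow_succ']
      have hy_le : v (Φ.act (P ^ (k₀ + j)) x) ≤ c ^ k₀ :=
        (hΦ.abv_act_pow_le hv hPc hc hx _).trans (pow_le_pow_of_le_one hc0 hc (by omega))
      have := hΦ.abv_alg_le_of_act_eq_zero hv hPy hy (hy_le.trans (pow_le_one₀ hc0 hc))
      linarith
  exact hdesc k (by rw [pow_add, act_mul, hk, map_zero])

theorem IsIntegralAt.exists_act_pow_eq_zero (hΦ : Φ.IsIntegralAt v) (hv : IsNonarchimedean v)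
    {P : Fq[X]} (hPu : ¬IsUnit P) (hP : ∀ a, ¬P ∣ a → v (algebraMap K L (Φ.alg a)) = 1)
    {x : L} (hx : Φ.IsTorsion x) (hx1 : v x < 1) : ∃ k, Φ.act (P ^ k) x = 0 := by
  obtain ⟨Q, hQ, hQx⟩ := hx
  obtain ⟨k, a, hPa, rfl⟩ := WfDvdMonoid.max_power_factor' hQ hPu
  refine ⟨k, not_not.mp fun hy => ?_⟩
  have hay : Φ.act a (Φ.act (P ^ k) x) = 0 := by rwa [← act_mul, mul_comm]
  have hyx := hΦ.abv_act_le_abv hv (P ^ k) hx1.le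
  have := hΦ.abv_alg_le_of_act_eq_zero hv hay hy (by linarith)
  rw [hP a hPa] at this
  linarith

theorem IsIntegralAt.finite_setOf_isTorsion_abv_le (hΦ : Φ.IsIntegralAt v)
    (hv : IsNonarchimedean v) {s : ℝ} (hs : s < 1) :
    {x : L | Φ.IsTorsion x ∧ v x ≤ s}.Finite := by
  obtain ⟨P, hPu, hP1, hP⟩ := hv.exists_forall_not_dvd_abv_eq_one
    ((algebraMap K L).comp Φ.alg) hΦ.abv_alg_le_one
  simp only [RingHom.comp_apply] at hP1 hP
  rcases eq_or_ne P 0 with rfl | hP0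
  · refine (Set.finite_singleton 0).subset fun x ⟨⟨a, ha, hax⟩, hxs⟩ => not_not.mp fun hx0 => ?_
    have := hΦ.abv_alg_le_of_act_eq_zero hv hax hx0 (by linarith)
    rw [hP a (by rwa [zero_dvd_iff])] at this
    linarith
  · have hP0' : algebraMap K L (Φ.alg P) ≠ 0 :=
      (_root_.map_ne_zero _).mpr ((map_ne_zero_iff _ Φ.alg_injective').mpr hP0)
    obtain ⟨k₀, hk₀⟩ := exists_pow_lt_of_lt_one (v.pos hP0') (max_lt hP1 hs)
    refine (Φ.finite_setOf_act_eq_zero (pow_ne_zero k₀ hP0)).subset fun x ⟨hx, hxs⟩ => ?_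
    obtain ⟨k, hk⟩ := hΦ.exists_act_pow_eq_zero hv hPu hP hx (hxs.trans_lt hs)
    exact hΦ.act_pow_eq_zero_of_pow_lt hv (le_max_left _ s) (max_lt hP1 hs).le hk₀
      (hxs.trans (le_max_right _ _)) hk

theorem IsIntegralAt.finite_setOf_isTorsion_abv_sub_le (hΦ : Φ.IsIntegralAt v)
    (hv : IsNonarchimedean v) (b : L) {s : ℝ} (hs : s < 1) :
    {x : L | Φ.IsTorsion x ∧ v (b - x) ≤ s}.Finite := by
  rcases Set.eq_empty_or_nonempty {x : L | Φ.IsTorsion x ∧ v (b - x) ≤ s} with h | ⟨x₀, hx₀⟩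
  · exact h ▸ Set.finite_empty
  refine ((hΦ.finite_setOf_isTorsion_abv_le hv hs).preimage sub_left_injective.injOn).subset
    fun x ⟨hx, hxb⟩ => ⟨hx.sub hx₀.1, ?_⟩
  calc v (x - x₀) = v ((b - x₀) - (b - x)) := by ring_nf
    _ ≤ s := (hv.apply_sub_le _ _).trans (max_le hx₀.2 hxb)

end Abv

end DrinfeldModuleData

theorem eventually_forall_isConjRoot_notMem {K L ι : Type*} [Field K] [Field L] [Algebra K L]
    {l : Filter ι} {γ : ι → L} (hγ : Tendsto γ l cofinite) (hint : ∀ i, IsIntegral K (γ i))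
    {B : Set L} (hB : B.Finite) : ∀ᶠ i in l, ∀ y, IsConjRoot K (γ i) y → y ∉ B := by
  have hC : (⋃ x ∈ B, (minpoly K x).rootSet L).Finite :=
    hB.biUnion fun x _ => rootSet_finite _ _
  filter_upwards [hγ.eventually hC.eventually_cofinite_notMem] with i hi y hy hyB
  exact hi (Set.mem_biUnion hyB
    ((isConjRoot_iff_mem_minpoly_rootSet (hy.isIntegral (hint i))).mp hy.symm))

theorem le_one_div_card_mul_sum {S : Multiset ℝ} {a : ℝ} (ha : a ≤ 0) (h : ∀ x ∈ S, a ≤ x) :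
    a ≤ 1 / (Multiset.card S : ℝ) * S.sum := by
  rcases Nat.eq_zero_or_pos (Multiset.card S) with hS | hS
  · simpa [hS] using ha
  have hsum : (Multiset.card S : ℝ) * a ≤ S.sum := by
    simpa [nsmul_eq_mul] using Multiset.card_nsmul_le_sum h
  rw [one_div_mul_eq_div, le_div_iff₀ (by exact_mod_cast hS), mul_comm]
  exact hsum

theorem tendsto_one_div_mul_sum_log_zero {ι α : Type*} {l : Filter ι} {m : ι → Multiset α}
    {d : ι → ℕ} {f : α → ℝ} (hcard : ∀ i, Multiset.card (m i) = d i) (hf0 : ∀ y, 0 ≤ f y)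
    (hf1 : ∀ i, ∀ y ∈ m i, f y ≤ 1) (hlt : ∀ s < 1, ∀ᶠ i in l, ∀ y ∈ m i, s < f y) :
    Tendsto (fun i => 1 / (d i : ℝ) * ((m i).map fun y => Real.log (f y)).sum) l (𝓝 0) := by
  have hmean : ∀ i, 1 / (d i : ℝ) * ((m i).map fun y => Real.log (f y)).sum =
      1 / (Multiset.card ((m i).map fun y => Real.log (f y)) : ℝ) *
        ((m i).map fun y => Real.log (f y)).sum := fun i => by rw [Multiset.card_map, hcard]
  refine tendsto_order.2 ⟨fun a ha => ?_, fun b hb => Eventually.of_forall fun i => ?_⟩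
  · filter_upwards [hlt (Real.exp (a / 2)) (Real.exp_lt_one_iff.mpr (by linarith))] with i hi
    rw [hmean]
    refine lt_of_lt_of_le (by linarith) (le_one_div_card_mul_sum (a := a / 2) (by linarith) ?_)
    simp only [Multiset.mem_map]
    rintro _ ⟨y, hy, rfl⟩
    exact (Real.le_log_iff_exp_le ((Real.exp_pos _).trans (hi y hy))).mpr (hi y hy).le
  · have hlog : ∀ x ∈ (m i).map fun y => Real.log (f y), x ≤ 0 := by
      simp only [Multiset.mem_map]
      rintro _ ⟨y, hy, rfl⟩
      exact Real.log_nonpos (hf0 y) (hf1 i y hy)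
    refine lt_of_le_of_lt (mul_nonpos_of_nonneg_of_nonpos (by positivity) ?_) hb
    simpa using Multiset.sum_le_card_nsmul _ 0 hlog

/-- Let `Φ` be a Drinfeld module over `K` in normal form with good reduction
at all finite places, `v` a finite place (extended to `K̄ = L`), `β ∈ K` with `|β|_v = 1`,
and `(γ_n)` an infinite sequence of distinct torsion points. Then
`lim_n (1/[K(γ_n):K])·Σ_σ log|β − γ_n^σ|_v = 0`, the sum running over the Galois
conjugates of `γ_n`, i.e. the roots of its minimal polynomial over `K`. -/
theorem stmt_16 (Fq K L : Type*) [Field Fq] [Fintype Fq] [Field K] [Field L]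
    [Algebra K L] [IsAlgClosed L]
    (Φ : DrinfeldModuleData Fq K)
    (v : AbsoluteValue L ℝ)
    (hna : ∀ x y : L, v (x + y) ≤ max (v x) (v y))
    (hgood : ∀ (a : Polynomial Fq) (i : ℕ), v (algebraMap K L ((Φ.toFun a).coeff i)) ≤ 1)
    (hmonic : ∀ a : Polynomial Fq, a ≠ 0 →
      v (algebraMap K L ((Φ.toFun a).leadingCoeff)) = 1)
    (β : K) (hβ : v (algebraMap K L β) = 1)
    (γ : ℕ → L) (hdist : Function.Injective γ)
    (htor : ∀ n : ℕ, ∃ Q : Polynomial Fq, Q ≠ 0 ∧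
      ((Φ.toFun Q).map (algebraMap K L)).eval (γ n) = 0) :
    Filter.Tendsto
      (fun n : ℕ =>
        (1 / ((minpoly K (γ n)).natDegree : ℝ)) *
          (((minpoly K (γ n)).map (algebraMap K L)).roots.map
              (fun y => Real.log (v (algebraMap K L β - y)))).sum)
      Filter.atTop (nhds 0) := by
  have hΦ : Φ.IsIntegralAt v := hgood
  have hv : IsNonarchimedean v := hna
  have hγ (n : ℕ) : Φ.IsTorsion (γ n) := by
    simpa only [DrinfeldModuleData.IsTorsion, DrinfeldModuleData.act_apply,
      ← eval_map_algebraMap] using htor n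
  have hconj (n : ℕ) (y : L) (hy : y ∈ (minpoly K (γ n)).aroots L) : IsConjRoot K (γ n) y :=
    (isConjRoot_iff_mem_minpoly_aroots (hγ n).isIntegral).mpr hy
  refine tendsto_one_div_mul_sum_log_zero (m := fun n => (minpoly K (γ n)).aroots L)
    (f := fun y => v (algebraMap K L β - y)) (fun _ => IsAlgClosed.card_aroots_eq_natDegree)
    (fun _ => v.nonneg _) (fun n y hy => ?_) (fun s hs => ?_)
  · have hy1 := ((hγ n).of_isConjRoot (hconj n y hy)).abv_le_one hΦ hv hmonic
    exact (hv.apply_sub_le _ _).trans (max_le hβ.le hy1)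
  · have hγl : Tendsto γ atTop cofinite := Nat.cofinite_eq_atTop ▸ hdist.tendsto_cofinite
    filter_upwards [eventually_forall_isConjRoot_notMem hγl (fun n => (hγ n).isIntegral)
      (hΦ.finite_setOf_isTorsion_abv_sub_le hv (algebraMap K L β) hs)] with n hn y hy
    exact not_le.mp fun hle => hn y (hconj n y hy) ⟨(hγ n).of_isConjRoot (hconj n y hy), hle⟩
end
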